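/- Lie–Trotter splitting error for separable time-dependent Hamiltonians: Let Ω ⊂ ℝ^{2d} be compact, and let V_q, V_p : ℝ × ℝ^d → ℝ be twice continuously differentiable with bounded first and second derivatives on a compact neighborhood of the relevant trajectories. Set H₁(s,(q,p)) = V_p(s,p), H₂(s,(q,p)) = V_q(s,q), and H = H₁ + H₂. Then there exists C > 0 such that for every t₀ ≥ 0, every step size h ∈ (0,1], and every x ∈ Ω, ‖φ_{H}^{t₀→t₀+h}(x) − (φ_{H₁}^{t₀→t₀+h} ∘ φ_{H₂}^{t₀→t₀+h})(x)‖_∞ ≤ C h², where φ_{G}^{t₀→t₀+h} denotes the flow map of z'(s) = J∇_x G(s, z(s)) from time t₀ to time t₀ + h. -/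

import Mathlib

/-!
Write `φ` for the exact flow, `φq` for the flow of `H₂ = V_q` from `x`, and `φp` for the flow of
`H₁ = V_p` from `φq (t₀ + h)`. The `H₂`-flow does not move `q` and the `H₁`-flow does not move `p`,
so both components of the splitting error are integrals over `[t₀, t₀ + h]` of differences of
`∇_q V_q` or `∇_p V_p` taken at two points of the flows. Each such difference is `O(h)`: it
telescopes into increments of `s ↦ ∇V(s, γ s)` with `γ` a component of one of the three flows, and
by the chain rule these move at speed at most `B (1 + B)`, because the curves stay in `K`, where
`|DV|, |D²V| ≤ B`. Differentiating only along the flows, never along segments, means `K` need not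
be convex.
-/

noncomputable section

/-- Phase-space factor `ℝ^d`. -/
abbrev Vec (d : ℕ) := EuclideanSpace ℝ (Fin d)

/-- Phase space `ℝ^{2d}` split as positions and momenta. -/
abbrev Phase (d : ℕ) := Vec d × Vec d

/-- Gradient with respect to the position variable. -/
def gradQ {d : ℕ} (H : Phase d → ℝ) (x : Phase d) : Vec d :=
  gradient (fun q => H (q, x.2)) x.1

/-- Gradient with respect to the momentum variable. -/
def gradP {d : ℕ} (H : Phase d → ℝ) (x : Phase d) : Vec d :=
  gradient (fun p => H (x.1, p)) x.2

/-- `J ∇H (q,p) = (∇ₚH(q,p), −∇_qH(q,p))`. -/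
def JgradH {d : ℕ} (H : Phase d → ℝ) (x : Phase d) : Phase d :=
  (gradP H x, - gradQ H x)

/-- Supremum norm on `ℝ^{2d}`: the max of the absolute values of all `2d` coordinates. -/
def supNorm {d : ℕ} (x : Phase d) : ℝ :=
  max ‖(WithLp.equiv 2 (Fin d → ℝ)) x.1‖ ‖(WithLp.equiv 2 (Fin d → ℝ)) x.2‖

theorem HasDerivAt.fst {𝕜 F G : Type*} [NontriviallyNormedField 𝕜] [NormedAddCommGroup F]
    [NormedSpace 𝕜 F] [NormedAddCommGroup G] [NormedSpace 𝕜 G] {f : 𝕜 → F × G} {f' : F × G}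
    {x : 𝕜} (hf : HasDerivAt f f' x) : HasDerivAt (fun t => (f t).1) f'.1 x :=
  (ContinuousLinearMap.fst 𝕜 F G).hasFDerivAt.comp_hasDerivAt x hf

theorem HasDerivAt.snd {𝕜 F G : Type*} [NontriviallyNormedField 𝕜] [NormedAddCommGroup F]
    [NormedSpace 𝕜 F] [NormedAddCommGroup G] [NormedSpace 𝕜 G] {f : 𝕜 → F × G} {f' : F × G}
    {x : 𝕜} (hf : HasDerivAt f f' x) : HasDerivAt (fun t => (f t).2) f'.2 x :=
  (ContinuousLinearMap.snd 𝕜 F G).hasFDerivAt.comp_hasDerivAt x hf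

open Set ContinuousLinearMap

namespace LieTrotter

section MeanValue

variable {G : Type*} [NormedAddCommGroup G] [NormedSpace ℝ G] {f f' : ℝ → G} {α β : ℝ}

theorem norm_sub_le_of_hasDerivAt {C : ℝ} (hαβ : α ≤ β)
    (hf : ∀ s ∈ Icc α β, HasDerivAt f (f' s) s) (hC : ∀ s ∈ Ico α β, ‖f' s‖ ≤ C) :
    ‖f β - f α‖ ≤ C * (β - α) :=
  norm_image_sub_le_of_norm_deriv_le_segment' (fun s hs => (hf s hs).hasDerivWithinAt) hC β
    ⟨hαβ, le_rfl⟩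

theorem eq_of_hasDerivAt_zero (hf : ∀ s ∈ Icc α β, HasDerivAt f 0 s) :
    ∀ s ∈ Icc α β, f s = f α := fun s hs => by
  have := norm_sub_le_of_hasDerivAt (f' := fun _ => 0) hs.1
    (fun τ hτ => hf τ ⟨hτ.1, hτ.2.trans hs.2⟩) (fun _ _ => norm_zero.le)
  rwa [zero_mul, norm_le_zero_iff, sub_eq_zero] at this

end MeanValue

section PartialGradient

variable {d : ℕ}

variable (d) in
/-- Sends `DF(s, y)` to the gradient in `y` of `F : ℝ × Vec d → ℝ`. -/
def partialGradL : ((ℝ × Vec d) →L[ℝ] ℝ) →L[ℝ] Vec d :=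
  (InnerProductSpace.toDual ℝ (Vec d)).symm.toContinuousLinearEquiv.toContinuousLinearMap.comp
    ((compL ℝ (Vec d) (ℝ × Vec d) ℝ).flip (inr ℝ ℝ (Vec d)))

def partialGrad (F : ℝ × Vec d → ℝ) (z : ℝ × Vec d) : Vec d :=
  partialGradL d (fderiv ℝ F z)

theorem partialGradL_apply (L : (ℝ × Vec d) →L[ℝ] ℝ) :
    partialGradL d L = (InnerProductSpace.toDual ℝ (Vec d)).symm (L.comp (inr ℝ ℝ (Vec d))) :=
  rfl

theorem norm_partialGradL_apply_le (L : (ℝ × Vec d) →L[ℝ] ℝ) : ‖partialGradL d L‖ ≤ ‖L‖ := by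
  rw [partialGradL_apply, LinearIsometryEquiv.norm_map]
  exact (opNorm_comp_le _ _).trans
    (mul_le_of_le_one_right (norm_nonneg _) (norm_inr_le_one ℝ ℝ (Vec d)))

theorem norm_partialGrad_le (F : ℝ × Vec d → ℝ) (z : ℝ × Vec d) :
    ‖partialGrad F z‖ ≤ ‖fderiv ℝ F z‖ :=
  norm_partialGradL_apply_le _

theorem gradient_eq_partialGrad {V : ℝ → Vec d → ℝ} {s : ℝ} {y : Vec d}
    (hV : DifferentiableAt ℝ (fun z : ℝ × Vec d => V z.1 z.2) (s, y)) :
    gradient (V s) y = partialGrad (fun z : ℝ × Vec d => V z.1 z.2) (s, y) := by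
  have hslice : HasFDerivAt (V s)
      ((fderiv ℝ (fun z : ℝ × Vec d => V z.1 z.2) (s, y)).comp (inr ℝ ℝ (Vec d))) y :=
    hV.hasFDerivAt.comp y (hasFDerivAt_prodMk_right s y)
  rw [gradient, hslice.fderiv]
  rfl

theorem hasDerivAt_partialGrad_comp {F : ℝ × Vec d → ℝ} {ζ : ℝ → ℝ × Vec d} {ζ' : ℝ × Vec d} {s : ℝ}
    (hF : DifferentiableAt ℝ (fderiv ℝ F) (ζ s)) (hζ : HasDerivAt ζ ζ' s) :
    HasDerivAt (fun τ => partialGrad F (ζ τ))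
      (partialGradL d (fderiv ℝ (fderiv ℝ F) (ζ s) ζ')) s :=
  (partialGradL d).hasFDerivAt.comp_hasDerivAt s (hF.hasFDerivAt.comp_hasDerivAt s hζ)

/-- Time and space move together along `s ↦ (s, γ s)`, so the second derivative of `F` is applied
to the velocity `(1, γ')`, of norm at most `1 + B`. -/
theorem norm_partialGrad_sub_le {F : ℝ × Vec d → ℝ} {γ γ' : ℝ → Vec d} {α β B : ℝ} (hαβ : α ≤ β)
    (hF : ∀ s ∈ Icc α β, DifferentiableAt ℝ (fderiv ℝ F) (s, γ s))
    (hγ : ∀ s ∈ Icc α β, HasDerivAt γ (γ' s) s)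
    (hB : ∀ s ∈ Ico α β, ‖γ' s‖ ≤ B ∧ ‖fderiv ℝ (fderiv ℝ F) (s, γ s)‖ ≤ B) :
    ‖partialGrad F (β, γ β) - partialGrad F (α, γ α)‖ ≤ B * (1 + B) * (β - α) := by
  refine norm_sub_le_of_hasDerivAt (f := fun s => partialGrad F (s, γ s)) hαβ
    (fun s hs => hasDerivAt_partialGrad_comp (hF s hs) ((hasDerivAt_id s).prodMk (hγ s hs)))
    fun s hs => ?_
  obtain ⟨hv, hD2⟩ := hB s hs
  have hB0 : 0 ≤ B := (norm_nonneg _).trans hv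
  have hvel : ‖((1 : ℝ), γ' s)‖ ≤ 1 + B := by
    rw [Prod.norm_mk, norm_one]
    exact max_le (by linarith) (by linarith)
  calc ‖partialGradL d (fderiv ℝ (fderiv ℝ F) (s, γ s) (1, γ' s))‖
      ≤ ‖fderiv ℝ (fderiv ℝ F) (s, γ s) (1, γ' s)‖ := norm_partialGradL_apply_le _
    _ ≤ ‖fderiv ℝ (fderiv ℝ F) (s, γ s)‖ * ‖((1 : ℝ), γ' s)‖ := le_opNorm _ _
    _ ≤ B * (1 + B) := mul_le_mul hD2 hvel (norm_nonneg _) hB0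

end PartialGradient

section Splitting

variable {d : ℕ}

/-- With `H₁ = Fp` and `H₂ = Fq`: `φ s = φ_H^{t₀→s}(x)`, `φq s = φ_{H₂}^{t₀→s}(x)` and
`φp s = φ_{H₁}^{t₀→s}(φ_{H₂}^{t₀→t₀+h}(x))` for `s ∈ [t₀, t₀ + h]`. -/
structure SplittingFlows (Fp Fq : ℝ × Vec d → ℝ) (K : Set (Phase d)) (B t₀ h : ℝ)
    (φ φq φp : ℝ → Phase d) : Prop where
  nonneg : 0 ≤ h
  differentiable_p : Differentiable ℝ (fderiv ℝ Fp)
  differentiable_q : Differentiable ℝ (fderiv ℝ Fq)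
  bound_p : ∀ s ∈ Icc t₀ (t₀ + h), ∀ y ∈ K,
    ‖fderiv ℝ Fp (s, y.2)‖ ≤ B ∧ ‖fderiv ℝ (fderiv ℝ Fp) (s, y.2)‖ ≤ B
  bound_q : ∀ s ∈ Icc t₀ (t₀ + h), ∀ y ∈ K,
    ‖fderiv ℝ Fq (s, y.1)‖ ≤ B ∧ ‖fderiv ℝ (fderiv ℝ Fq) (s, y.1)‖ ≤ B
  hasDerivAt : ∀ s ∈ Icc t₀ (t₀ + h),
    HasDerivAt φ (partialGrad Fp (s, (φ s).2), -partialGrad Fq (s, (φ s).1)) s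
  hasDerivAt_q : ∀ s ∈ Icc t₀ (t₀ + h), HasDerivAt φq (0, -partialGrad Fq (s, (φq s).1)) s
  hasDerivAt_p : ∀ s ∈ Icc t₀ (t₀ + h), HasDerivAt φp (partialGrad Fp (s, (φp s).2), 0) s
  start : φ t₀ = φq t₀
  start_p : φp t₀ = φq (t₀ + h)
  mem : ∀ s ∈ Icc t₀ (t₀ + h), φ s ∈ K ∧ φq s ∈ K ∧ φp s ∈ K

namespace SplittingFlows

variable {Fp Fq : ℝ × Vec d → ℝ} {K : Set (Phase d)} {B t₀ h : ℝ} {φ φq φp : ℝ → Phase d}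

theorem left_mem (H : SplittingFlows Fp Fq K B t₀ h φ φq φp) : t₀ ∈ Icc t₀ (t₀ + h) :=
  left_mem_Icc.2 (le_add_of_nonneg_right H.nonneg)

theorem right_mem (H : SplittingFlows Fp Fq K B t₀ h φ φq φp) : t₀ + h ∈ Icc t₀ (t₀ + h) :=
  right_mem_Icc.2 (le_add_of_nonneg_right H.nonneg)

theorem bound_nonneg (H : SplittingFlows Fp Fq K B t₀ h φ φq φp) : 0 ≤ B :=
  (norm_nonneg _).trans (H.bound_p t₀ H.left_mem _ (H.mem t₀ H.left_mem).1).1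

theorem norm_partialGrad_p_le (H : SplittingFlows Fp Fq K B t₀ h φ φq φp) {s : ℝ}
    (hs : s ∈ Icc t₀ (t₀ + h)) {y : Phase d} (hy : y ∈ K) : ‖partialGrad Fp (s, y.2)‖ ≤ B :=
  (norm_partialGrad_le _ _).trans (H.bound_p s hs y hy).1

theorem norm_partialGrad_q_le (H : SplittingFlows Fp Fq K B t₀ h φ φq φp) {s : ℝ}
    (hs : s ∈ Icc t₀ (t₀ + h)) {y : Phase d} (hy : y ∈ K) : ‖partialGrad Fq (s, y.1)‖ ≤ B :=
  (norm_partialGrad_le _ _).trans (H.bound_q s hs y hy).1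

theorem fst_flow_q (H : SplittingFlows Fp Fq K B t₀ h φ φq φp) :
    ∀ s ∈ Icc t₀ (t₀ + h), (φq s).1 = (φq t₀).1 :=
  eq_of_hasDerivAt_zero fun s hs => (H.hasDerivAt_q s hs).fst

theorem snd_flow_p (H : SplittingFlows Fp Fq K B t₀ h φ φq φp) :
    ∀ s ∈ Icc t₀ (t₀ + h), (φp s).2 = (φq (t₀ + h)).2 := fun s hs => by
  rw [eq_of_hasDerivAt_zero (fun s hs => (H.hasDerivAt_p s hs).snd) s hs, H.start_p]

theorem norm_partialGrad_p_sub_le (H : SplittingFlows Fp Fq K B t₀ h φ φq φp)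
    {c : ℝ → Phase d} {v : ℝ → Vec d} (hcK : ∀ s ∈ Icc t₀ (t₀ + h), c s ∈ K)
    (hc : ∀ s ∈ Icc t₀ (t₀ + h), HasDerivAt (fun τ => (c τ).2) (v s) s)
    (hv : ∀ s ∈ Icc t₀ (t₀ + h), ‖v s‖ ≤ B) {σ τ : ℝ} (hσ : t₀ ≤ σ) (hστ : σ ≤ τ)
    (hτ : τ ≤ t₀ + h) :
    ‖partialGrad Fp (τ, (c τ).2) - partialGrad Fp (σ, (c σ).2)‖ ≤ B * (1 + B) * (τ - σ) := by
  have hsub : Ico σ τ ⊆ Icc t₀ (t₀ + h) := Ico_subset_Icc_self.trans (Icc_subset_Icc hσ hτ)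
  exact norm_partialGrad_sub_le (γ := fun τ => (c τ).2) (γ' := v) hστ
    (fun s _ => H.differentiable_p _)
    (fun s hs => hc s (Icc_subset_Icc hσ hτ hs))
    fun s hs => ⟨hv s (hsub hs), (H.bound_p s (hsub hs) _ (hcK s (hsub hs))).2⟩

theorem norm_partialGrad_q_sub_le (H : SplittingFlows Fp Fq K B t₀ h φ φq φp)
    {c : ℝ → Phase d} {v : ℝ → Vec d} (hcK : ∀ s ∈ Icc t₀ (t₀ + h), c s ∈ K)
    (hc : ∀ s ∈ Icc t₀ (t₀ + h), HasDerivAt (fun τ => (c τ).1) (v s) s)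
    (hv : ∀ s ∈ Icc t₀ (t₀ + h), ‖v s‖ ≤ B) {σ τ : ℝ} (hσ : t₀ ≤ σ) (hστ : σ ≤ τ)
    (hτ : τ ≤ t₀ + h) :
    ‖partialGrad Fq (τ, (c τ).1) - partialGrad Fq (σ, (c σ).1)‖ ≤ B * (1 + B) * (τ - σ) := by
  have hsub : Ico σ τ ⊆ Icc t₀ (t₀ + h) := Ico_subset_Icc_self.trans (Icc_subset_Icc hσ hτ)
  exact norm_partialGrad_sub_le (γ := fun τ => (c τ).1) (γ' := v) hστ
    (fun s _ => H.differentiable_q _)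
    (fun s hs => hc s (Icc_subset_Icc hσ hτ hs))
    fun s hs => ⟨hv s (hsub hs), (H.bound_q s (hsub hs) _ (hcK s (hsub hs))).2⟩

theorem norm_snd_sub_le (H : SplittingFlows Fp Fq K B t₀ h φ φq φp) :
    ‖(φ (t₀ + h)).2 - (φp (t₀ + h)).2‖ ≤ 2 * (B * (1 + B)) * h ^ 2 := by
  have hB := H.bound_nonneg
  have hdrift : ∀ s ∈ Ico t₀ (t₀ + h),
      ‖-partialGrad Fq (s, (φ s).1) - -partialGrad Fq (s, (φq s).1)‖ ≤ 2 * (B * (1 + B)) * h := by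
    intro s hs
    have hφ := H.norm_partialGrad_q_sub_le (c := φ) (v := fun s => partialGrad Fp (s, (φ s).2))
      (fun s hs => (H.mem s hs).1) (fun s hs => (H.hasDerivAt s hs).fst)
      (fun s hs => H.norm_partialGrad_p_le hs (H.mem s hs).1) le_rfl hs.1 hs.2.le
    have hφq := H.norm_partialGrad_q_sub_le (c := φq) (v := fun _ => 0)
      (fun s hs => (H.mem s hs).2.1) (fun s hs => (H.hasDerivAt_q s hs).fst)
      (fun _ _ => norm_zero.trans_le hB) le_rfl hs.1 hs.2.le
    rw [H.start] at hφ
    calc _ = ‖(partialGrad Fq (s, (φq s).1) - partialGrad Fq (t₀, (φq t₀).1))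
          - (partialGrad Fq (s, (φ s).1) - partialGrad Fq (t₀, (φq t₀).1))‖ := by
          congr 1; abel
      _ ≤ B * (1 + B) * (s - t₀) + B * (1 + B) * (s - t₀) := norm_sub_le_of_le hφq hφ
      _ = 2 * (B * (1 + B)) * (s - t₀) := by ring
      _ ≤ 2 * (B * (1 + B)) * h :=
          mul_le_mul_of_nonneg_left (by linarith [hs.2]) (by positivity)
  have hbound := norm_sub_le_of_hasDerivAt (f := fun s => (φ s).2 - (φq s).2)
    (le_add_of_nonneg_right H.nonneg)
    (fun s hs => (H.hasDerivAt s hs).snd.sub (H.hasDerivAt_q s hs).snd) hdrift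
  rw [H.start, sub_self, sub_zero, add_sub_cancel_left] at hbound
  rw [H.snd_flow_p _ H.right_mem, sq, ← mul_assoc]
  exact hbound

theorem norm_fst_sub_le (H : SplittingFlows Fp Fq K B t₀ h φ φq φp) :
    ‖(φ (t₀ + h)).1 - (φp (t₀ + h)).1‖ ≤ 2 * (B * (1 + B)) * h ^ 2 := by
  have hB := H.bound_nonneg
  have hdrift : ∀ s ∈ Ico t₀ (t₀ + h),
      ‖partialGrad Fp (s, (φ s).2) - partialGrad Fp (s, (φp s).2)‖ ≤ 2 * (B * (1 + B)) * h := by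
    intro s hs
    have hφ := H.norm_partialGrad_p_sub_le (c := φ) (v := fun s => -partialGrad Fq (s, (φ s).1))
      (fun s hs => (H.mem s hs).1) (fun s hs => (H.hasDerivAt s hs).snd)
      (fun s hs => (norm_neg _).trans_le (H.norm_partialGrad_q_le hs (H.mem s hs).1))
      le_rfl hs.1 hs.2.le
    have hφq := H.norm_partialGrad_p_sub_le (c := φq) (v := fun s => -partialGrad Fq (s, (φq s).1))
      (fun s hs => (H.mem s hs).2.1) (fun s hs => (H.hasDerivAt_q s hs).snd)
      (fun s hs => (norm_neg _).trans_le (H.norm_partialGrad_q_le hs (H.mem s hs).2.1))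
      le_rfl H.right_mem.1 le_rfl
    have hφp := H.norm_partialGrad_p_sub_le (c := φp) (v := fun _ => 0)
      (fun s hs => (H.mem s hs).2.2) (fun s hs => (H.hasDerivAt_p s hs).snd)
      (fun _ _ => norm_zero.trans_le hB) hs.1 hs.2.le le_rfl
    rw [H.start] at hφ
    rw [H.snd_flow_p _ H.right_mem] at hφp
    calc _ = ‖(partialGrad Fp (s, (φ s).2) - partialGrad Fp (t₀, (φq t₀).2))
          - (partialGrad Fp (t₀ + h, (φq (t₀ + h)).2) - partialGrad Fp (t₀, (φq t₀).2))
          + (partialGrad Fp (t₀ + h, (φq (t₀ + h)).2) - partialGrad Fp (s, (φp s).2))‖ := by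
          congr 1; abel
      _ ≤ B * (1 + B) * (s - t₀) + B * (1 + B) * (t₀ + h - t₀) + B * (1 + B) * (t₀ + h - s) :=
          norm_add_le_of_le (norm_sub_le_of_le hφ hφq) hφp
      _ = 2 * (B * (1 + B)) * h := by ring
  have hbound := norm_sub_le_of_hasDerivAt (f := fun s => (φ s).1 - (φp s).1)
    (le_add_of_nonneg_right H.nonneg)
    (fun s hs => (H.hasDerivAt s hs).fst.sub (H.hasDerivAt_p s hs).fst) hdrift
  rw [H.start, H.start_p, H.fst_flow_q _ H.right_mem, sub_self, sub_zero, add_sub_cancel_left]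
    at hbound
  rw [sq, ← mul_assoc]
  exact hbound

theorem norm_sub_le (H : SplittingFlows Fp Fq K B t₀ h φ φq φp) :
    ‖φ (t₀ + h) - φp (t₀ + h)‖ ≤ 2 * (B * (1 + B)) * h ^ 2 :=
  max_le H.norm_fst_sub_le H.norm_snd_sub_le

end SplittingFlows

end Splitting

section PhaseSpace

variable {d : ℕ}

theorem JgradH_add (f g : Vec d → ℝ) (y : Phase d) :
    JgradH (fun y : Phase d => f y.2 + g y.1) y = (gradient f y.2, -gradient g y.1) := by
  simp only [JgradH, gradP, gradQ, gradient, fderiv_add_const, fderiv_const_add]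

theorem JgradH_comp_snd (f : Vec d → ℝ) (y : Phase d) :
    JgradH (fun y : Phase d => f y.2) y = (gradient f y.2, 0) :=
  Prod.ext rfl (neg_eq_zero.2 (gradient_fun_const y.1 (f y.2)))

theorem JgradH_comp_fst (g : Vec d → ℝ) (y : Phase d) :
    JgradH (fun y : Phase d => g y.1) y = (0, -gradient g y.1) :=
  Prod.ext (gradient_fun_const y.2 (g y.1)) rfl

theorem supNorm_le_norm (x : Phase d) : supNorm x ≤ ‖x‖ := by
  have hsup (v : Vec d) : ‖(WithLp.equiv 2 (Fin d → ℝ)) v‖ ≤ ‖v‖ :=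
    (pi_norm_le_iff_of_nonneg (norm_nonneg v)).2 fun i => PiLp.norm_apply_le v i
  exact max_le_max (hsup x.1) (hsup x.2)

end PhaseSpace

end LieTrotter

open LieTrotter

theorem lie_trotter_splitting_error
    (d : ℕ) (Ω : Set (Phase d))
    (Vq Vp : ℝ → Vec d → ℝ)
    (hVq : ContDiff ℝ 2 (fun z : ℝ × Vec d => Vq z.1 z.2))
    (hVp : ContDiff ℝ 2 (fun z : ℝ × Vec d => Vp z.1 z.2))
    (K : Set (Phase d))
    (B : ℝ)
    (hBq : ∀ s ≥ (0:ℝ), ∀ x ∈ K,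
      ‖fderiv ℝ (fun z : ℝ × Vec d => Vq z.1 z.2) (s, x.1)‖ ≤ B ∧
      ‖fderiv ℝ (fderiv ℝ (fun z : ℝ × Vec d => Vq z.1 z.2)) (s, x.1)‖ ≤ B)
    (hBp : ∀ s ≥ (0:ℝ), ∀ x ∈ K,
      ‖fderiv ℝ (fun z : ℝ × Vec d => Vp z.1 z.2) (s, x.2)‖ ≤ B ∧
      ‖fderiv ℝ (fderiv ℝ (fun z : ℝ × Vec d => Vp z.1 z.2)) (s, x.2)‖ ≤ B)
    (ΦH Φ1 Φ2 : ℝ → ℝ → Phase d → Phase d)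
    (hΦH0 : ∀ t₀ ≥ (0:ℝ), ∀ x : Phase d, ΦH t₀ t₀ x = x)
    (hΦ10 : ∀ t₀ ≥ (0:ℝ), ∀ x : Phase d, Φ1 t₀ t₀ x = x)
    (hΦ20 : ∀ t₀ ≥ (0:ℝ), ∀ x : Phase d, Φ2 t₀ t₀ x = x)
    (hΦH : ∀ t₀ ≥ (0:ℝ), ∀ x : Phase d, ∀ s ≥ t₀,
      HasDerivAt (fun u => ΦH t₀ u x)
        (JgradH (fun y : Phase d => Vp s y.2 + Vq s y.1) (ΦH t₀ s x)) s)
    (hΦ1 : ∀ t₀ ≥ (0:ℝ), ∀ x : Phase d, ∀ s ≥ t₀,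
      HasDerivAt (fun u => Φ1 t₀ u x)
        (JgradH (fun y : Phase d => Vp s y.2) (Φ1 t₀ s x)) s)
    (hΦ2 : ∀ t₀ ≥ (0:ℝ), ∀ x : Phase d, ∀ s ≥ t₀,
      HasDerivAt (fun u => Φ2 t₀ u x)
        (JgradH (fun y : Phase d => Vq s y.1) (Φ2 t₀ s x)) s)
    (htraj : ∀ t₀ ≥ (0:ℝ), ∀ h ∈ Set.Ioc (0:ℝ) 1, ∀ x ∈ Ω, ∀ s ∈ Set.Icc t₀ (t₀ + h),
      ΦH t₀ s x ∈ K ∧ Φ2 t₀ s x ∈ K ∧ Φ1 t₀ s (Φ2 t₀ (t₀ + h) x) ∈ K) :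
    ∃ C > (0:ℝ), ∀ t₀ ≥ (0:ℝ), ∀ h ∈ Set.Ioc (0:ℝ) 1, ∀ x ∈ Ω,
      supNorm (ΦH t₀ (t₀ + h) x - Φ1 t₀ (t₀ + h) (Φ2 t₀ (t₀ + h) x)) ≤ C * h ^ 2 := by
  have hgradp (s : ℝ) (p : Vec d) := gradient_eq_partialGrad (hVp.differentiable two_ne_zero (s, p))
  have hgradq (s : ℝ) (q : Vec d) := gradient_eq_partialGrad (hVq.differentiable two_ne_zero (s, q))
  refine ⟨2 * (B * (1 + B)) + 1, by nlinarith [sq_nonneg (2 * B + 1)],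
    fun t₀ ht₀ h hh x hx => ?_⟩
  have H : SplittingFlows _ _ K B t₀ h (fun s => ΦH t₀ s x) (fun s => Φ2 t₀ s x)
      (fun s => Φ1 t₀ s (Φ2 t₀ (t₀ + h) x)) :=
    { nonneg := hh.1.le
      differentiable_p := (hVp.fderiv_right le_rfl).differentiable one_ne_zero
      differentiable_q := (hVq.fderiv_right le_rfl).differentiable one_ne_zero
      bound_p := fun s hs => hBp s (ht₀.trans hs.1)
      bound_q := fun s hs => hBq s (ht₀.trans hs.1)
      hasDerivAt := fun s hs => by
        simpa only [JgradH_add, hgradp, hgradq] using hΦH t₀ ht₀ x s hs.1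
      hasDerivAt_q := fun s hs => by
        simpa only [JgradH_comp_fst, hgradq] using hΦ2 t₀ ht₀ x s hs.1
      hasDerivAt_p := fun s hs => by
        simpa only [JgradH_comp_snd, hgradp] using hΦ1 t₀ ht₀ _ s hs.1
      start := (hΦH0 t₀ ht₀ x).trans (hΦ20 t₀ ht₀ x).symm
      start_p := hΦ10 t₀ ht₀ _
      mem := htraj t₀ ht₀ h hh x hx }
  calc supNorm _ ≤ ‖_‖ := supNorm_le_norm _
    _ ≤ 2 * (B * (1 + B)) * h ^ 2 := H.norm_sub_le
    _ ≤ (2 * (B * (1 + B)) + 1) * h ^ 2 := by nlinarith [sq_nonneg h]
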